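/- Let μ and ν be positive Borel measures on 𝔻 and ∂𝔻 respectively, let ω be an A_1 weight on ∂𝔻 with μ({z : ν(T(z)) = 0}) = 0 = μ({z : ω(T(z)) = 0}), and let 0 < p ≤ q < ∞ with q ≥ 1. If the generalized area operator A_{μ,ν} : H^p(ω) → L^q(ω) is bounded, then there is a constant C such that for every arc I ⊆ ∂𝔻, ∫_I ∫_{Γ(ξ) ∩ Λ(I)} (1/ν(T(z))) dμ(z) ω(ξ)|dξ| ≤ C·(ω(I))^{1 + 1/p − 1/q}, where Λ(I) = {z ∈ 𝔻 : closure of I_z ⊆ I}. -/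

import Mathlib

open MeasureTheory Set Filter
open scoped ENNReal Real

noncomputable section

/-- The point of the unit circle with angle `θ`. -/
def bpt (θ : ℝ) : ℂ := Complex.exp (θ * Complex.I)

/-- The open unit disk in the complex plane. -/
def unitDisk : Set ℂ := Metric.ball 0 1

/-- Normalized (by `1/(2π)`) integral of an `ℝ≥0∞`-valued function over the unit circle,
parametrized by angle. -/
def circInt (g : ℝ → ℝ≥0∞) : ℝ≥0∞ :=
  (ENNReal.ofReal (2 * π))⁻¹ * ∫⁻ θ in Set.Ioc 0 (2 * π), g θ

/-- `ω(I) = ∫_I ω(ξ)|dξ|` for the arc `I` with initial angle `a` and angular length `ℓ`. -/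
def wInt (ω : ℝ → ℝ) (a ℓ : ℝ) : ℝ≥0∞ :=
  ∫⁻ θ in Set.Ioo a (a + ℓ), ENNReal.ofReal (ω θ)

/-- `ω` is an `A₁` weight on the unit circle: it is `2π`-periodic, nonnegative, measurable, and
`(1/|I|)∫_I ω ≤ C · essinf_I ω` for every arc `I` (here `|I| = ℓ/(2π)` is the normalized length,
and all integrals over arcs are written in the angle variable). -/
def IsA1 (ω : ℝ → ℝ) : Prop :=
  Function.Periodic ω (2 * π) ∧ Measurable ω ∧ (∀ θ, 0 ≤ ω θ) ∧
  ∃ C : ℝ, 0 < C ∧ ∀ a ℓ : ℝ, 0 < ℓ → ℓ ≤ 2 * π →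
    wInt ω a ℓ ≤ ENNReal.ofReal (C * ℓ) *
      essInf (fun θ => ENNReal.ofReal (ω θ)) (volume.restrict (Set.Ioo a (a + ℓ)))

/-- `f` belongs to the classical Hardy space `H¹` of the unit disk. -/
def MemH1 (f : ℂ → ℂ) : Prop :=
  DifferentiableOn ℂ f unitDisk ∧
  ∃ C : ℝ, ∀ r : ℝ, 0 ≤ r → r < 1 →
    circInt (fun θ => ENNReal.ofReal (‖f ((r : ℂ) * bpt θ)‖)) ≤ ENNReal.ofReal C

/-- `fb` is the (a.e. defined) boundary-value function of `f` (radial limits a.e.). -/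
def HasBoundary (f : ℂ → ℂ) (fb : ℝ → ℂ) : Prop :=
  Measurable fb ∧
  ∀ᵐ θ : ℝ, Filter.Tendsto (fun r : ℝ => f ((r : ℂ) * bpt θ))
    (nhdsWithin 1 (Set.Iio 1)) (nhds (fb θ))

/-- The `p`-th power of the norm of a boundary function `fb` in `L^p(ω)`:
`(1/2π)∫_{∂𝔻} |fb|^p ω`. -/
def lpNormP (p : ℝ) (ω : ℝ → ℝ) (fb : ℝ → ℂ) : ℝ≥0∞ :=
  circInt fun θ => ENNReal.ofReal (‖fb θ‖ ^ p * ω θ)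

/-- The norm of a boundary function `fb` in `L^p(ω)` (equivalently, the `H^p(ω)` norm). -/
def wLpNorm (p : ℝ) (ω : ℝ → ℝ) (fb : ℝ → ℂ) : ℝ≥0∞ := lpNormP p ω fb ^ (1 / p)

/-- `f`, with boundary values `fb`, belongs to the weighted Hardy space `H^p(ω)`. -/
def MemHp (p : ℝ) (ω : ℝ → ℝ) (f : ℂ → ℂ) (fb : ℝ → ℂ) : Prop :=
  MemH1 f ∧ HasBoundary f fb ∧ lpNormP p ω fb < ⊤

/-- The norm of `f` in `L^q(dμ)` over the unit disk. -/
def lqMuNorm (q : ℝ) (μ : Measure ℂ) (f : ℂ → ℂ) : ℝ≥0∞ :=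
  (∫⁻ z in unitDisk, ENNReal.ofReal (‖f z‖) ^ q ∂μ) ^ (1 / q)

/-- The Carleson square over the arc with initial angle `a` and angular length `ℓ`
(whose normalized length is `|I| = ℓ/(2π)`). -/
def carleson (a ℓ : ℝ) : Set ℂ :=
  {z | z ∈ unitDisk ∧ 1 - ℓ / (2 * π) ≤ ‖z‖ ∧
    ∃ θ ∈ Set.Ioo a (a + ℓ), z = (‖z‖ : ℂ) * bpt θ}

/-- The nontangential approach region `Γ(ξ) = {z ∈ 𝔻 : |ξ - z| < 2(1-|z|)}`. -/
def stolz (ξ : ℂ) : Set ℂ := {z ∈ unitDisk | ‖ξ - z‖ < 2 * (1 - ‖z‖)}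

/-- The set `T(z) = {ξ ∈ ∂𝔻 : z ∈ Γ(ξ)}`, as a subset of the circle in `ℂ`. -/
def Tset (z : ℂ) : Set ℂ := {ξ | ‖ξ‖ = 1 ∧ z ∈ stolz ξ}

/-- `ν(T(z))` for a Borel measure `ν` on the unit circle. -/
def Tmeas (ν : Measure ℂ) (z : ℂ) : ℝ≥0∞ := ν (Tset z)

/-- `ω(T(z)) = ∫_{T(z)} ω(ξ)|dξ|`, in the angle variable. -/
def TmeasW (ω : ℝ → ℝ) (z : ℂ) : ℝ≥0∞ :=
  ∫⁻ θ in {θ : ℝ | θ ∈ Set.Ioc 0 (2 * π) ∧ z ∈ stolz (bpt θ)}, ENNReal.ofReal (ω θ)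

/-- The generalized area operator `A_{μ,ν} f(ξ) = ∫_{Γ(ξ)} |f(z)| dμ(z)/ν(T(z))`. -/
def areaOp (μ : Measure ℂ) (ν : Measure ℂ) (f : ℂ → ℂ) (θ : ℝ) : ℝ≥0∞ :=
  ∫⁻ z in stolz (bpt θ), ENNReal.ofReal (‖f z‖) / Tmeas ν z ∂μ

/-- The measure `dμ_ν^ω(z) = (ω(T(z))/ν(T(z))) dμ(z)`. -/
def muNuOmega (μ : Measure ℂ) (ν : Measure ℂ) (ω : ℝ → ℝ) : Measure ℂ :=
  μ.withDensity fun z => TmeasW ω z / Tmeas ν z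

/-- The arc `I_z` (of angular width `1-|z|`, centered at `z/|z|`) is contained, modulo `2π`,
in the arc with initial angle `a` and angular length `ℓ`. -/
def IzSub (z : ℂ) (a ℓ : ℝ) : Prop :=
  ∃ k : ℤ, a ≤ Complex.arg z - (1 - ‖z‖) / 2 + 2 * π * k ∧
    Complex.arg z + (1 - ‖z‖) / 2 + 2 * π * k ≤ a + ℓ

/-- The weighted maximal function `M_ω g(z) = sup_{I ⊇ I_z} (1/ω(I))∫_I |g| ω`. -/
def maxFn (ω : ℝ → ℝ) (g : ℝ → ℂ) (z : ℂ) : ℝ≥0∞ :=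
  ⨆ (a : ℝ) (ℓ : ℝ) (_ : 0 < ℓ ∧ ℓ ≤ 2 * π ∧ IzSub z a ℓ),
    (∫⁻ θ in Set.Ioo a (a + ℓ), ENNReal.ofReal (‖g θ‖ * ω θ)) / wInt ω a ℓ

/-- `M_{ω,α}(μ)(z) = sup_{I ⊇ I_z} μ(S(I))/ω(I)^α`. -/
def maxCarl (ω : ℝ → ℝ) (α : ℝ) (μ : Measure ℂ) (z : ℂ) : ℝ≥0∞ :=
  ⨆ (a : ℝ) (ℓ : ℝ) (_ : 0 < ℓ ∧ ℓ ≤ 2 * π ∧ IzSub z a ℓ),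
    μ (carleson a ℓ) / wInt ω a ℓ ^ α

/-- `μ̃_ω(ξ) = (1/(2πω(ξ))) ∫_𝔻 (1-|z|²)/|ξ-z|² dμ(z)`. -/
def tildeMu (μ : Measure ℂ) (ω : ℝ → ℝ) (θ : ℝ) : ℝ≥0∞ :=
  (ENNReal.ofReal (2 * π * ω θ))⁻¹ *
    ∫⁻ z in unitDisk, ENNReal.ofReal ((1 - ‖z‖ ^ 2) / ‖bpt θ - z‖ ^ 2) ∂μ

/-- `μ̂_ω(ξ) = (1/ω(ξ)) ∫_{Γ(ξ)} dμ(z)/(1-|z|)`. -/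
def hatMu (μ : Measure ℂ) (ω : ℝ → ℝ) (θ : ℝ) : ℝ≥0∞ :=
  (ENNReal.ofReal (ω θ))⁻¹ *
    ∫⁻ z in stolz (bpt θ), ENNReal.ofReal ((1 - ‖z‖)⁻¹) ∂μ

/-- `Λ(I) = {z ∈ 𝔻 : closure of I_z ⊆ I}`, for the arc `I` with initial angle `b` and
angular length `ℓ` (containment of arcs taken modulo `2π`). -/
def lambdaSet (b ℓ : ℝ) : Set ℂ :=
  {z | z ∈ unitDisk ∧ ∃ k : ℤ,
    b < Complex.arg z - (1 - ‖z‖) / 2 + 2 * π * k ∧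
    Complex.arg z + (1 - ‖z‖) / 2 + 2 * π * k < b + ℓ}


/-!
Test the boundedness of `A_{μ,ν}` on `f = ((1 - |a|) / (1 - \bar a z))^N`, where
`a = (1 - ℓ/7) ξ_I`, `ξ_I = e^{iθ_I}` is the midpoint of `I`, `ℓ` its angular length, and
`N p ≥ 2`. On `Λ(I)` one has `|f| ≥ 8^{-N}`, so the inner integral is at most `8^N A_{μ,ν} f`.
On the layer `2^{k-1} ℓ ≤ |θ - θ_I| < 2^k ℓ` one has `|f|^p ≤ 4^{-k}`, and the `A₁` condition
gives `ω(J) ≤ C (|J|/|I|) ω(I)` for arcs `J ⊇ I`; summing over the layers,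
`‖f‖^p_{L^p(ω)} ≲ ω(I)`. Hölder's inequality on `I` for the measure `ω dθ` then bounds the
left-hand side by `8^N ‖A_{μ,ν} f‖_{L^q(ω)} ω(I)^{1-1/q} ≲ ω(I)^{1/p + 1 - 1/q}`.
-/

lemma Function.Periodic.setLIntegral_Ioc_eq {g : ℝ → ℝ≥0∞} {T : ℝ}
    (hg : Function.Periodic g T) (hT : 0 < T) (s t : ℝ) :
    ∫⁻ x in Ioc s (s + T), g x = ∫⁻ x in Ioc t (t + T), g x := by
  have := Fact.mk hT
  have hlift : ∀ x : ℝ, g x = hg.lift (x : AddCircle T) := fun x => (hg.lift_coe x).symm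
  simp only [hlift, AddCircle.lintegral_preimage]

lemma Function.Periodic.setLIntegral_Ioo_le {g : ℝ → ℝ≥0∞} {T : ℝ}
    (hg : Function.Periodic g T) (hT : 0 < T) {b ℓ : ℝ} (hℓ : ℓ ≤ T) (t : ℝ) :
    ∫⁻ x in Ioo b (b + ℓ), g x ≤ ∫⁻ x in Ioc t (t + T), g x :=
  calc ∫⁻ x in Ioo b (b + ℓ), g x ≤ ∫⁻ x in Ioc b (b + T), g x :=
        lintegral_mono_set (Ioo_subset_Ioc_self.trans (Ioc_subset_Ioc_right (by linarith)))
    _ = ∫⁻ x in Ioc t (t + T), g x := hg.setLIntegral_Ioc_eq hT b t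

/-- Unlike Mathlib's Hölder inequalities this assumes no measurability of `G`: the inner
integrals over `Γ(ξ) ∩ Λ(I)` need not be measurable in `ξ` for an arbitrary measure `μ`. -/
lemma lintegral_le_lintegral_rpow_mul_measure_univ {α : Type*} [MeasurableSpace α]
    (μ : Measure α) (G : α → ℝ≥0∞) {q : ℝ} (hq : 1 ≤ q) :
    ∫⁻ x, G x ∂μ ≤ (∫⁻ x, G x ^ q ∂μ) ^ (1 / q) * μ univ ^ (1 - 1 / q) := by
  obtain ⟨G', hG'm, hG'le, hG'eq⟩ := exists_measurable_le_lintegral_eq μ G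
  have hq0 : q ≠ 0 := by positivity
  have hG' (x : α) : G' x = (G' x ^ q) ^ (1 / q) * 1 ^ (1 - 1 / q) := by
    rw [ENNReal.one_rpow, mul_one, ← ENNReal.rpow_mul, mul_one_div_cancel hq0, ENNReal.rpow_one]
  calc ∫⁻ x, G x ∂μ = ∫⁻ x, (G' x ^ q) ^ (1 / q) * 1 ^ (1 - 1 / q) ∂μ := by
        simp only [hG'eq, ← hG']
    _ ≤ (∫⁻ x, G' x ^ q ∂μ) ^ (1 / q) * (∫⁻ _, 1 ∂μ) ^ (1 - 1 / q) :=
        ENNReal.lintegral_mul_norm_pow_le (hG'm.pow_const q).aemeasurable aemeasurable_const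
          (by positivity) (sub_nonneg.mpr (div_le_one_of_le₀ hq (by positivity))) (by ring)
    _ ≤ (∫⁻ x, G x ^ q ∂μ) ^ (1 / q) * μ univ ^ (1 - 1 / q) := by
        rw [lintegral_one]
        gcongr with x
        exact hG'le x

lemma lintegral_mul_le_lintegral_rpow_mul {α : Type*} [MeasurableSpace α] (μ : Measure α)
    {w : α → ℝ≥0∞} (hw : Measurable w) (hw_top : ∀ᵐ x ∂μ, w x < ⊤) (G : α → ℝ≥0∞) {q : ℝ}
    (hq : 1 ≤ q) :
    ∫⁻ x, G x * w x ∂μ ≤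
      (∫⁻ x, G x ^ q * w x ∂μ) ^ (1 / q) * (∫⁻ x, w x ∂μ) ^ (1 - 1 / q) := by
  have hdens : ∀ F : α → ℝ≥0∞, ∫⁻ x, F x * w x ∂μ = ∫⁻ x, F x ∂μ.withDensity w := fun F => by
    rw [lintegral_withDensity_eq_lintegral_mul_non_measurable μ hw hw_top]
    simp only [Pi.mul_apply, mul_comm]
  have hmass : ∫⁻ x, w x ∂μ = μ.withDensity w univ := by
    rw [withDensity_apply _ MeasurableSet.univ, Measure.restrict_univ]
  rw [hdens, hdens, hmass]
  exact lintegral_le_lintegral_rpow_mul_measure_univ _ G hq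

lemma norm_bpt (θ : ℝ) : ‖bpt θ‖ = 1 := by
  simp [bpt, Complex.norm_exp]

lemma bpt_add (x y : ℝ) : bpt (x + y) = bpt x * bpt y := by
  simp only [bpt, ← Complex.exp_add]
  push_cast
  ring_nf

lemma bpt_add_int_mul_two_pi (x : ℝ) (k : ℤ) : bpt (x + 2 * π * k) = bpt x := by
  simp only [bpt]
  push_cast
  rw [show ((x : ℂ) + 2 * π * k) * Complex.I = x * Complex.I + k * (2 * π * Complex.I) by ring,
    Complex.exp_add, Complex.exp_int_mul_two_pi_mul_I, mul_one]

lemma bpt_periodic : Function.Periodic bpt (2 * π) := fun x => by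
  simpa using bpt_add_int_mul_two_pi x 1

lemma norm_bpt_sub_bpt (x y : ℝ) : ‖bpt x - bpt y‖ = 2 * |Real.sin ((x - y) / 2)| := by
  have hsplit : bpt x - bpt y = bpt y * (Complex.exp (Complex.I * (x - y : ℝ)) - 1) := by
    rw [mul_sub, mul_one, mul_comm Complex.I, ← bpt, ← bpt_add, add_sub_cancel]
  rw [hsplit, norm_mul, norm_bpt, one_mul, Complex.norm_exp_I_mul_ofReal_sub_one,
    Real.norm_eq_abs, abs_mul, abs_two]

lemma norm_bpt_sub_bpt_le (x y : ℝ) : ‖bpt x - bpt y‖ ≤ |x - y| := by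
  rw [norm_bpt_sub_bpt]
  have := Real.abs_sin_le_abs (x := (x - y) / 2)
  rw [abs_div, abs_two] at this
  linarith

lemma mul_abs_le_norm_bpt_sub_bpt {x y : ℝ} (h : |x - y| ≤ π) :
    2 / π * |x - y| ≤ ‖bpt x - bpt y‖ := by
  rw [norm_bpt_sub_bpt]
  have hhalf : |(x - y) / 2| ≤ π / 2 := by
    rw [abs_div, abs_two]
    linarith
  have := Real.mul_abs_le_abs_sin hhalf
  rw [abs_div, abs_two] at this
  calc 2 / π * |x - y| = 2 * (2 / π * (|x - y| / 2)) := by ring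
    _ ≤ 2 * |Real.sin ((x - y) / 2)| := by linarith

lemma le_norm_bpt_sub_mul {δ : ℝ} (hδ1 : δ ≤ 1) (c : ℝ) {z : ℂ} (hz : ‖z‖ ≤ 1) :
    δ ≤ ‖bpt c - (1 - δ : ℝ) * z‖ := by
  have hmul : ‖((1 - δ : ℝ) : ℂ) * z‖ ≤ 1 - δ := by
    rw [norm_mul, Complex.norm_real, Real.norm_of_nonneg (by linarith)]
    nlinarith [norm_nonneg z]
  have := norm_sub_norm_le (bpt c) (((1 - δ : ℝ) : ℂ) * z)
  rw [norm_bpt] at this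
  linarith

lemma wInt_le_of_Ioo_subset {ω : ℝ → ℝ} {C : ℝ}
    (hA1 : ∀ a ℓ : ℝ, 0 < ℓ → ℓ ≤ 2 * π → wInt ω a ℓ ≤ ENNReal.ofReal (C * ℓ) *
      essInf (fun θ => ENNReal.ofReal (ω θ)) (volume.restrict (Ioo a (a + ℓ))))
    {a L b ℓ : ℝ} (hℓ : 0 < ℓ) (hL : 0 < L) (hL2π : L ≤ 2 * π)
    (hsub : Ioo b (b + ℓ) ⊆ Ioo a (a + L)) :
    wInt ω a L ≤ ENNReal.ofReal (C * L / ℓ) * wInt ω b ℓ := by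
  set essInfOn := fun s : Set ℝ => essInf (fun θ => ENNReal.ofReal (ω θ)) (volume.restrict s)
  have hanti : essInfOn (Ioo a (a + L)) ≤ essInfOn (Ioo b (b + ℓ)) :=
    essInf_antitone_measure
      (Measure.absolutelyContinuous_of_le (Measure.restrict_mono hsub le_rfl))
  have hmean : ENNReal.ofReal ℓ * essInfOn (Ioo b (b + ℓ)) ≤ wInt ω b ℓ :=
    calc ENNReal.ofReal ℓ * essInfOn (Ioo b (b + ℓ))
        = ∫⁻ _ in Ioo b (b + ℓ), essInfOn (Ioo b (b + ℓ)) := by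
          rw [setLIntegral_const, Real.volume_Ioo, add_sub_cancel_left, mul_comm]
      _ ≤ wInt ω b ℓ := lintegral_mono_ae ae_essInf_le
  calc wInt ω a L ≤ ENNReal.ofReal (C * L) * essInfOn (Ioo a (a + L)) := hA1 a L hL hL2π
    _ ≤ ENNReal.ofReal (C * L / ℓ) * (ENNReal.ofReal ℓ * essInfOn (Ioo b (b + ℓ))) := by
        rw [← mul_assoc, ← ENNReal.ofReal_mul' hℓ.le, div_mul_cancel₀ _ hℓ.ne']
        gcongr
    _ ≤ ENNReal.ofReal (C * L / ℓ) * wInt ω b ℓ := by gcongr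

lemma ofReal_inv_four_pow_mul_wInt_le {ω : ℝ → ℝ} {C : ℝ} (hC : 0 ≤ C)
    (hA1 : ∀ a ℓ : ℝ, 0 < ℓ → ℓ ≤ 2 * π → wInt ω a ℓ ≤ ENNReal.ofReal (C * ℓ) *
      essInf (fun θ => ENNReal.ofReal (ω θ)) (volume.restrict (Ioo a (a + ℓ))))
    {b ℓ : ℝ} (hℓ : 0 < ℓ) (hℓ2π : ℓ ≤ 2 * π) (k : ℕ) :
    ENNReal.ofReal (4⁻¹ ^ k) *
        wInt ω (b + ℓ / 2 - min (2 ^ k * ℓ) π) (2 * min (2 ^ k * ℓ) π) ≤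
      ENNReal.ofReal (2 * C * 2⁻¹ ^ k) * wInt ω b ℓ := by
  set m := min (2 ^ k * ℓ) π
  have hm : ℓ / 2 ≤ m := le_min (by nlinarith [one_le_pow₀ (M₀ := ℝ) one_le_two (n := k)])
    (by linarith)
  have hdouble := wInt_le_of_Ioo_subset hA1 hℓ (by positivity : 0 < 2 * m)
    (by linarith [min_le_right (2 ^ k * ℓ) π]) (a := b + ℓ / 2 - m) (b := b)
    (fun x hx => ⟨by linarith [hx.1], by linarith [hx.2]⟩)
  have hcoef : 4⁻¹ ^ k * (C * (2 * m) / ℓ) ≤ 2 * C * 2⁻¹ ^ k :=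
    calc 4⁻¹ ^ k * (C * (2 * m) / ℓ) ≤ 4⁻¹ ^ k * (C * (2 * (2 ^ k * ℓ)) / ℓ) := by
          gcongr
          exact min_le_left _ _
      _ = 2 * C * (4⁻¹ * 2) ^ k := by rw [mul_pow]; field_simp
      _ = 2 * C * 2⁻¹ ^ k := by norm_num
  calc ENNReal.ofReal (4⁻¹ ^ k) * wInt ω (b + ℓ / 2 - m) (2 * m)
      ≤ ENNReal.ofReal (4⁻¹ ^ k) * (ENNReal.ofReal (C * (2 * m) / ℓ) * wInt ω b ℓ) := by
        gcongr
    _ = ENNReal.ofReal (4⁻¹ ^ k * (C * (2 * m) / ℓ)) * wInt ω b ℓ := by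
        rw [← mul_assoc, ← ENNReal.ofReal_mul (by positivity)]
    _ ≤ ENNReal.ofReal (2 * C * 2⁻¹ ^ k) * wInt ω b ℓ := by
        gcongr ENNReal.ofReal ?_ * _

/-- Up to a unimodular factor, the `N`-th power of the normalized Cauchy kernel
`(1 - |a|) / (1 - \bar a z)` at `a = (1 - ℓ / 7) ξ`, `ξ` the midpoint of the arc. Since
`ℓ ≤ 2π < 7`, its pole `ξ / (1 - ℓ / 7)` lies outside the closed disk. -/
def arcTestFn (b ℓ : ℝ) (N : ℕ) (z : ℂ) : ℂ :=
  ((ℓ / 7 : ℝ) / (bpt (b + ℓ / 2) - (1 - ℓ / 7 : ℝ) * z)) ^ N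

section ArcTestFn

variable {b ℓ : ℝ}

lemma div_seven_lt_one_of_le_two_pi (hℓ2π : ℓ ≤ 2 * π) : ℓ / 7 < 1 := by
  linarith [Real.pi_lt_d2]

lemma norm_arcTestFn (hℓ : 0 < ℓ) (N : ℕ) (z : ℂ) :
    ‖arcTestFn b ℓ N z‖ = (ℓ / 7 / ‖bpt (b + ℓ / 2) - (1 - ℓ / 7 : ℝ) * z‖) ^ N := by
  rw [arcTestFn, norm_pow, norm_div, Complex.norm_real, Real.norm_of_nonneg (by positivity)]

lemma norm_arcTestFn_le_one (hℓ : 0 < ℓ) (hℓ2π : ℓ ≤ 2 * π) (N : ℕ) {z : ℂ}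
    (hz : ‖z‖ ≤ 1) : ‖arcTestFn b ℓ N z‖ ≤ 1 := by
  have hden := le_norm_bpt_sub_mul (div_seven_lt_one_of_le_two_pi hℓ2π).le (b + ℓ / 2) hz
  rw [norm_arcTestFn hℓ]
  exact pow_le_one₀ (by positivity) (div_le_one_of_le₀ hden (by positivity))

lemma bpt_sub_mul_ne_zero (hℓ : 0 < ℓ) (hℓ2π : ℓ ≤ 2 * π) {z : ℂ} (hz : ‖z‖ ≤ 1) :
    bpt (b + ℓ / 2) - (1 - ℓ / 7 : ℝ) * z ≠ 0 :=
  norm_pos_iff.mp ((le_norm_bpt_sub_mul (div_seven_lt_one_of_le_two_pi hℓ2π).le _ hz).trans_lt'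
    (by positivity))

lemma differentiableAt_arcTestFn (hℓ : 0 < ℓ) (hℓ2π : ℓ ≤ 2 * π) (N : ℕ) {z : ℂ}
    (hz : ‖z‖ ≤ 1) : DifferentiableAt ℂ (arcTestFn b ℓ N) z := by
  unfold arcTestFn
  apply DifferentiableAt.pow
  apply DifferentiableAt.div (by fun_prop) (by fun_prop)
  exact bpt_sub_mul_ne_zero hℓ hℓ2π hz

lemma arcTestFn_memHp (hℓ : 0 < ℓ) (hℓ2π : ℓ ≤ 2 * π) (p : ℝ) (ω : ℝ → ℝ) (N : ℕ)
    (hfin : lpNormP p ω (fun θ => arcTestFn b ℓ N (bpt θ)) < ⊤) :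
    MemHp p ω (arcTestFn b ℓ N) (fun θ => arcTestFn b ℓ N (bpt θ)) := by
  have hcircle (r θ : ℝ) (hr0 : 0 ≤ r) (hr1 : r ≤ 1) : ‖(r : ℂ) * bpt θ‖ ≤ 1 := by
    rwa [norm_mul, norm_bpt, mul_one, Complex.norm_real, Real.norm_of_nonneg hr0]
  have hradial (θ : ℝ) : ContinuousAt (fun r : ℝ => arcTestFn b ℓ N ((r : ℂ) * bpt θ)) 1 :=
    (differentiableAt_arcTestFn hℓ hℓ2π N (by simpa using hcircle 1 θ zero_le_one le_rfl)
      ).continuousAt.comp (by fun_prop)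
  refine ⟨⟨fun z hz => (differentiableAt_arcTestFn hℓ hℓ2π N ?_).differentiableWithinAt, 1,
    fun r hr0 hr1 => ?_⟩, ⟨?_, ae_of_all _ fun θ => ?_⟩, hfin⟩
  · simpa [unitDisk] using (Metric.mem_ball.mp hz).le
  · calc circInt (fun θ => ENNReal.ofReal ‖arcTestFn b ℓ N ((r : ℂ) * bpt θ)‖)
        ≤ circInt (fun _ => 1) := by
          refine mul_le_mul_right (lintegral_mono fun θ => ENNReal.ofReal_le_one.mpr ?_) _
          exact norm_arcTestFn_le_one hℓ hℓ2π N (hcircle r θ hr0 hr1.le)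
      _ = ENNReal.ofReal 1 := by
          rw [circInt, setLIntegral_const, Real.volume_Ioc, sub_zero, one_mul,
            ENNReal.inv_mul_cancel (by simp [Real.pi_pos]) ENNReal.ofReal_ne_top,
            ENNReal.ofReal_one]
  · refine (continuous_iff_continuousAt.mpr fun θ => ?_).measurable
    exact (differentiableAt_arcTestFn hℓ hℓ2π N (norm_bpt θ).le).continuousAt.comp
      (by unfold bpt; fun_prop)
  · simpa using (hradial θ).tendsto.mono_left nhdsWithin_le_nhds

lemma inv_eight_pow_le_norm_arcTestFn (hℓ : 0 < ℓ) (hℓ2π : ℓ ≤ 2 * π) (N : ℕ) {z : ℂ}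
    (hz : z ∈ lambdaSet b ℓ) : (8⁻¹ : ℝ) ^ N ≤ ‖arcTestFn b ℓ N z‖ := by
  obtain ⟨hzD, k, hk1, hk2⟩ := hz
  have hz1 : ‖z‖ < 1 := by simpa [unitDisk] using hzD
  have hmid : ‖bpt (b + ℓ / 2) - bpt (Complex.arg z)‖ ≤ ℓ / 2 - (1 - ‖z‖) / 2 := by
    rw [← bpt_add_int_mul_two_pi (Complex.arg z) k]
    exact (norm_bpt_sub_bpt_le _ _).trans (abs_le.mpr ⟨by linarith, by linarith⟩)
  have hradial : ‖bpt (Complex.arg z) - z‖ = 1 - ‖z‖ := by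
    have hpolar : bpt (Complex.arg z) - z = ((1 - ‖z‖ : ℝ) : ℂ) * bpt (Complex.arg z) := by
      nth_rewrite 2 [← Complex.norm_mul_exp_arg_mul_I z]
      push_cast [bpt]
      ring
    rw [hpolar, norm_mul, norm_bpt, mul_one, Complex.norm_real, Real.norm_of_nonneg (by linarith)]
  have hshift : ‖((ℓ / 7 : ℝ) : ℂ) * z‖ ≤ ℓ / 7 := by
    rw [norm_mul, Complex.norm_real, Real.norm_of_nonneg (by positivity)]
    nlinarith [norm_nonneg z]
  have hden : ‖bpt (b + ℓ / 2) - (1 - ℓ / 7 : ℝ) * z‖ ≤ 8 * (ℓ / 7) := by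
    have hsplit : bpt (b + ℓ / 2) - (1 - ℓ / 7 : ℝ) * z =
        (bpt (b + ℓ / 2) - bpt (Complex.arg z)) + (bpt (Complex.arg z) - z) +
          ((ℓ / 7 : ℝ) : ℂ) * z := by
      push_cast
      ring
    rw [hsplit]
    refine (norm_add₃_le ..).trans ?_
    linarith
  have hpos : 0 < ‖bpt (b + ℓ / 2) - (1 - ℓ / 7 : ℝ) * z‖ :=
    norm_pos_iff.mpr (bpt_sub_mul_ne_zero hℓ hℓ2π hz1.le)
  rw [norm_arcTestFn hℓ]
  gcongr
  rw [le_div_iff₀ hpos]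
  linarith

lemma norm_arcTestFn_bpt_le (hℓ : 0 < ℓ) (N : ℕ) {θ : ℝ}
    (hfar : ℓ ≤ |θ - (b + ℓ / 2)|) (hnear : |θ - (b + ℓ / 2)| ≤ π) :
    ‖arcTestFn b ℓ N (bpt θ)‖ ≤ (ℓ / (2 * |θ - (b + ℓ / 2)|)) ^ N := by
  set d := |θ - (b + ℓ / 2)|
  have hd : 0 < d := hℓ.trans_le hfar
  have hchord : 2 / π * d ≤ ‖bpt (b + ℓ / 2) - bpt θ‖ := by
    simpa only [abs_sub_comm] using mul_abs_le_norm_bpt_sub_bpt (x := b + ℓ / 2) (y := θ)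
      (by rwa [abs_sub_comm])
  have hπ : 1 / 2 ≤ 2 / π := by
    rw [div_le_div_iff₀ two_pos Real.pi_pos]
    linarith [Real.pi_le_four]
  have hshift : ‖((1 - ℓ / 7 : ℝ) : ℂ) * bpt θ - bpt θ‖ = ℓ / 7 := by
    rw [← sub_one_mul, norm_mul, norm_bpt, mul_one, ← Complex.ofReal_one, ← Complex.ofReal_sub,
      Complex.norm_real, sub_sub_cancel_left, norm_neg, Real.norm_of_nonneg (by positivity)]
  have hden : 5 / 14 * d ≤ ‖bpt (b + ℓ / 2) - (1 - ℓ / 7 : ℝ) * bpt θ‖ := by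
    have := norm_sub_le_norm_sub_add_norm_sub (bpt (b + ℓ / 2)) ((1 - ℓ / 7 : ℝ) * bpt θ)
      (bpt θ)
    nlinarith
  rw [norm_arcTestFn hℓ]
  refine pow_le_pow_left₀ (by positivity) ?_ N
  rw [div_le_div_iff₀ (by nlinarith) (by positivity)]
  nlinarith

lemma exists_rpow_norm_arcTestFn_bpt_le (hℓ : 0 < ℓ) (hℓ2π : ℓ ≤ 2 * π) {N : ℕ} {p : ℝ}
    (hp : 0 < p) (hNp : 2 ≤ N * p) {θ : ℝ} (hθ : |θ - (b + ℓ / 2)| ≤ π) :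
    ∃ k : ℕ, |θ - (b + ℓ / 2)| < 2 ^ k * ℓ ∧ ‖arcTestFn b ℓ N (bpt θ)‖ ^ p ≤ 4⁻¹ ^ k := by
  set d := |θ - (b + ℓ / 2)|
  rcases lt_or_ge d ℓ with hnear | hfar
  · refine ⟨0, by simpa using hnear, ?_⟩
    simpa using Real.rpow_le_one (norm_nonneg _)
      (norm_arcTestFn_le_one hℓ hℓ2π N (norm_bpt θ).le) hp.le
  obtain ⟨n, hn, hn'⟩ := exists_nat_pow_near ((one_le_div hℓ).mpr hfar) one_lt_two
  rw [le_div_iff₀ hℓ] at hn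
  rw [div_lt_iff₀ hℓ] at hn'
  have hd : 0 < d := hℓ.trans_le hfar
  set r := ℓ / (2 * d)
  have hr : r ≤ 2⁻¹ ^ (n + 1) := by
    rw [inv_pow, ← one_div, div_le_div_iff₀ (by positivity) (by positivity), pow_succ]
    nlinarith
  have hr1 : r ≤ 1 := hr.trans (pow_le_one₀ (by norm_num) (by norm_num))
  have hr0 : 0 < r := by positivity
  refine ⟨n + 1, hn', ?_⟩
  calc ‖arcTestFn b ℓ N (bpt θ)‖ ^ p ≤ (r ^ N) ^ p := by
        gcongr
        exact norm_arcTestFn_bpt_le hℓ N hfar hθ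
    _ = r ^ (N * p) := by rw [← Real.rpow_natCast, ← Real.rpow_mul hr0.le]
    _ ≤ r ^ (2 : ℝ) := Real.rpow_le_rpow_of_exponent_ge hr0 hr1 hNp
    _ ≤ (2⁻¹ ^ (n + 1)) ^ 2 := by rw [Real.rpow_two]; gcongr
    _ = 4⁻¹ ^ (n + 1) := by rw [← pow_mul, mul_comm, pow_mul]; norm_num

/-- The radii are capped at `π` so that every arc of the decomposition has length at most
`2π`, as the `A₁` condition requires. -/
lemma ofReal_rpow_norm_arcTestFn_mul_le_tsum (hℓ : 0 < ℓ) (hℓ2π : ℓ ≤ 2 * π) {N : ℕ}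
    {p : ℝ} (hp : 0 < p) (hNp : 2 ≤ N * p) (ω : ℝ → ℝ) {θ : ℝ}
    (hθ : θ ∈ Ioo (b + ℓ / 2 - π) (b + ℓ / 2 + π)) :
    ENNReal.ofReal (‖arcTestFn b ℓ N (bpt θ)‖ ^ p * ω θ) ≤
      ∑' k : ℕ, ENNReal.ofReal (4⁻¹ ^ k) *
        (Ioo (b + ℓ / 2 - min (2 ^ k * ℓ) π) (b + ℓ / 2 + min (2 ^ k * ℓ) π)).indicator
          (fun t => ENNReal.ofReal (ω t)) θ := by
  have hθ' : |θ - (b + ℓ / 2)| < π :=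
    abs_sub_lt_iff.mpr ⟨by linarith [hθ.2], by linarith [hθ.1]⟩
  obtain ⟨k, hk, hbound⟩ := exists_rpow_norm_arcTestFn_bpt_le hℓ hℓ2π hp hNp hθ'.le
  have hmem : θ ∈ Ioo (b + ℓ / 2 - min (2 ^ k * ℓ) π) (b + ℓ / 2 + min (2 ^ k * ℓ) π) := by
    have := abs_sub_lt_iff.mp (lt_min hk hθ')
    constructor <;> linarith
  refine le_trans ?_ (ENNReal.le_tsum k)
  rw [indicator_of_mem hmem, ENNReal.ofReal_mul (by positivity)]
  gcongr

end ArcTestFn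

lemma IsA1.exists_lpNormP_arcTestFn_le {ω : ℝ → ℝ} (hω : IsA1 ω) {p : ℝ} (hp : 0 < p) :
    ∃ C : ℝ, 0 < C ∧ ∀ N : ℕ, 2 ≤ N * p → ∀ b ℓ : ℝ, 0 < ℓ → ℓ ≤ 2 * π →
      lpNormP p ω (fun θ => arcTestFn b ℓ N (bpt θ)) ≤ ENNReal.ofReal C * wInt ω b ℓ := by
  obtain ⟨hper, hmeas, -, C, hC, hA1⟩ := hω
  refine ⟨4 * C, by positivity, fun N hNp b ℓ hℓ hℓ2π => ?_⟩
  set c := b + ℓ / 2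
  set m : ℕ → ℝ := fun k => min (2 ^ k * ℓ) π
  set h : ℝ → ℝ≥0∞ := fun θ => ENNReal.ofReal (‖arcTestFn b ℓ N (bpt θ)‖ ^ p * ω θ)
  have hh : Function.Periodic h (2 * π) := fun θ => by simp only [h, bpt_periodic θ, hper θ]
  calc lpNormP p ω (fun θ => arcTestFn b ℓ N (bpt θ)) ≤ ∫⁻ θ in Ioc 0 (2 * π), h θ :=
        mul_le_of_le_one_left' (ENNReal.inv_le_one.mpr (ENNReal.one_le_ofReal.mpr
          (by linarith [Real.pi_gt_three])))
    _ = ∫⁻ θ in Ioo (c - π) (c + π), h θ := by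
        rw [← zero_add (2 * π), hh.setLIntegral_Ioc_eq (by positivity) 0 (c - π),
          show c - π + 2 * π = c + π by ring, setLIntegral_congr Ioo_ae_eq_Ioc]
    _ ≤ ∫⁻ θ in Ioo (c - π) (c + π), ∑' k : ℕ, ENNReal.ofReal (4⁻¹ ^ k) *
          (Ioo (c - m k) (c + m k)).indicator (fun t => ENNReal.ofReal (ω t)) θ :=
        setLIntegral_mono' measurableSet_Ioo fun θ hθ =>
          ofReal_rpow_norm_arcTestFn_mul_le_tsum hℓ hℓ2π hp hNp ω hθ
    _ ≤ ∑' k : ℕ, ENNReal.ofReal (4⁻¹ ^ k) * wInt ω (c - m k) (2 * m k) := by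
        have hind (k : ℕ) :=
          hmeas.ennreal_ofReal.indicator (measurableSet_Ioo (a := c - m k) (b := c + m k))
        refine (setLIntegral_le_lintegral _ _).trans_eq ?_
        rw [lintegral_tsum fun k => (hind k).aemeasurable.const_mul _]
        congr 1 with k
        rw [lintegral_const_mul _ (hind k), lintegral_indicator measurableSet_Ioo, wInt]
        ring_nf
    _ ≤ ∑' k : ℕ, ENNReal.ofReal (2 * C * 2⁻¹ ^ k) * wInt ω b ℓ :=
        ENNReal.tsum_le_tsum (ofReal_inv_four_pow_mul_wInt_le hC.le hA1 hℓ hℓ2π)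
    _ = ENNReal.ofReal (4 * C) * wInt ω b ℓ := by
        rw [ENNReal.tsum_mul_right, ← ENNReal.ofReal_tsum_of_nonneg (fun k => by positivity)
          ((summable_geometric_of_lt_one (by norm_num) (by norm_num)).mul_left _),
          tsum_mul_left, tsum_geometric_inv_two]
        ring_nf

lemma measurableSet_lambdaSet (b ℓ : ℝ) : MeasurableSet (lambdaSet b ℓ) := by
  have hunion : lambdaSet b ℓ = unitDisk ∩ ⋃ k : ℤ,
      {z : ℂ | b < Complex.arg z - (1 - ‖z‖) / 2 + 2 * π * k} ∩
        {z : ℂ | Complex.arg z + (1 - ‖z‖) / 2 + 2 * π * k < b + ℓ} := by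
    ext z
    simp only [lambdaSet, mem_ofPred_eq, mem_inter_iff, mem_iUnion]
  rw [hunion]
  exact measurableSet_ball.inter (.iUnion fun k =>
    (measurableSet_lt (by fun_prop) (by fun_prop)).inter
      (measurableSet_lt (by fun_prop) (by fun_prop)))

lemma isOpen_stolz (ξ : ℂ) : IsOpen (stolz ξ) :=
  Metric.isOpen_ball.inter
    (isOpen_lt (f := fun z => ‖ξ - z‖) (g := fun z => 2 * (1 - ‖z‖)) (by fun_prop) (by fun_prop))

lemma setLIntegral_inv_Tmeas_le_areaOp (μ ν : Measure ℂ) {b ℓ : ℝ} (hℓ : 0 < ℓ)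
    (hℓ2π : ℓ ≤ 2 * π) (N : ℕ) (θ : ℝ) :
    ∫⁻ z in stolz (bpt θ) ∩ lambdaSet b ℓ, (Tmeas ν z)⁻¹ ∂μ ≤
      ENNReal.ofReal (8 ^ N) * areaOp μ ν (arcTestFn b ℓ N) θ := by
  have hpt : ∀ z ∈ stolz (bpt θ) ∩ lambdaSet b ℓ, (Tmeas ν z)⁻¹ ≤
      ENNReal.ofReal (8 ^ N) * (ENNReal.ofReal ‖arcTestFn b ℓ N z‖ / Tmeas ν z) := by
    intro z hz
    calc (Tmeas ν z)⁻¹ = ENNReal.ofReal (8 ^ N) * (ENNReal.ofReal (8⁻¹ ^ N) / Tmeas ν z) := by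
          rw [← mul_div_assoc, ← ENNReal.ofReal_mul (by positivity), ← mul_pow]
          norm_num
      _ ≤ ENNReal.ofReal (8 ^ N) * (ENNReal.ofReal ‖arcTestFn b ℓ N z‖ / Tmeas ν z) := by
          gcongr
          exact inv_eight_pow_le_norm_arcTestFn hℓ hℓ2π N hz.2
  calc ∫⁻ z in stolz (bpt θ) ∩ lambdaSet b ℓ, (Tmeas ν z)⁻¹ ∂μ
      ≤ ∫⁻ z in stolz (bpt θ) ∩ lambdaSet b ℓ,
          ENNReal.ofReal (8 ^ N) * (ENNReal.ofReal ‖arcTestFn b ℓ N z‖ / Tmeas ν z) ∂μ :=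
        setLIntegral_mono' ((isOpen_stolz _).measurableSet.inter (measurableSet_lambdaSet b ℓ))
          hpt
    _ = ENNReal.ofReal (8 ^ N) * ∫⁻ z in stolz (bpt θ) ∩ lambdaSet b ℓ,
          ENNReal.ofReal ‖arcTestFn b ℓ N z‖ / Tmeas ν z ∂μ :=
        lintegral_const_mul' _ _ ENNReal.ofReal_ne_top
    _ ≤ ENNReal.ofReal (8 ^ N) * areaOp μ ν (arcTestFn b ℓ N) θ := by
        gcongr
        exact lintegral_mono_set inter_subset_left

lemma setLIntegral_Ioc_eq_mul_circInt (g : ℝ → ℝ≥0∞) :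
    ∫⁻ θ in Ioc 0 (2 * π), g θ = ENNReal.ofReal (2 * π) * circInt g := by
  rw [circInt, ENNReal.mul_inv_cancel_left (by simp [Real.pi_pos]) ENNReal.ofReal_ne_top]

lemma setLIntegral_mul_le_wInt_rpow {g : ℝ → ℝ≥0∞} (hg : Function.Periodic g (2 * π))
    {ω : ℝ → ℝ} (hper : Function.Periodic ω (2 * π)) (hmeas : Measurable ω) {p q : ℝ}
    (hp : 0 < p) (hq : 1 ≤ q) {b ℓ : ℝ} (hℓ2π : ℓ ≤ 2 * π) {C₁ C₂ : ℝ} (hC₁ : 0 ≤ C₁)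
    (hC₂ : 0 ≤ C₂)
    (hgq : (circInt fun θ => g θ ^ q * ENNReal.ofReal (ω θ)) ^ (1 / q) ≤
      ENNReal.ofReal C₂ * (ENNReal.ofReal C₁ * wInt ω b ℓ) ^ (1 / p)) :
    ∫⁻ θ in Ioo b (b + ℓ), g θ * ENNReal.ofReal (ω θ) ≤
      ENNReal.ofReal ((2 * π) ^ (1 / q) * C₂ * C₁ ^ (1 / p)) *
        wInt ω b ℓ ^ (1 + 1 / p - 1 / q) := by
  have hq' : 1 / q ≤ 1 := div_le_one_of_le₀ hq (by linarith)
  have hgq_per : Function.Periodic (fun θ => g θ ^ q * ENNReal.ofReal (ω θ)) (2 * π) :=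
    fun θ => by simp only [hg θ, hper θ]
  set W := wInt ω b ℓ
  calc ∫⁻ θ in Ioo b (b + ℓ), g θ * ENNReal.ofReal (ω θ)
      ≤ (∫⁻ θ in Ioo b (b + ℓ), g θ ^ q * ENNReal.ofReal (ω θ)) ^ (1 / q) * W ^ (1 - 1 / q) :=
        lintegral_mul_le_lintegral_rpow_mul _ hmeas.ennreal_ofReal
          (ae_of_all _ fun _ => ENNReal.ofReal_lt_top) g hq
    _ ≤ (ENNReal.ofReal (2 * π) * circInt fun θ => g θ ^ q * ENNReal.ofReal (ω θ)) ^ (1 / q) *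
          W ^ (1 - 1 / q) := by
        rw [← setLIntegral_Ioc_eq_mul_circInt]
        gcongr ?_ ^ _ * _
        simpa only [zero_add] using hgq_per.setLIntegral_Ioo_le (by positivity) hℓ2π 0
    _ ≤ ENNReal.ofReal (2 * π) ^ (1 / q) *
          (ENNReal.ofReal C₂ * (ENNReal.ofReal C₁ * W) ^ (1 / p)) * W ^ (1 - 1 / q) := by
        rw [ENNReal.mul_rpow_of_nonneg _ _ (by positivity)]
        gcongr
    _ = ENNReal.ofReal ((2 * π) ^ (1 / q) * C₂ * C₁ ^ (1 / p)) * W ^ (1 + 1 / p - 1 / q) := by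
        rw [ENNReal.mul_rpow_of_nonneg _ _ (by positivity),
          ENNReal.ofReal_rpow_of_nonneg (by positivity) (by positivity),
          ENNReal.ofReal_rpow_of_nonneg hC₁ (by positivity),
          show 1 + 1 / p - 1 / q = 1 / p + (1 - 1 / q) by ring,
          ENNReal.rpow_add_of_nonneg _ _ (by positivity) (sub_nonneg.mpr hq'),
          ENNReal.ofReal_mul (by positivity), ENNReal.ofReal_mul (by positivity)]
        ring

theorem area_operator_necessity_estimate_general
    (μ ν : Measure ℂ) (ω : ℝ → ℝ) (p q : ℝ)
    (hω : IsA1 ω) (hp : 0 < p) (hq : 1 ≤ q)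
    (hbdd : ∃ C : ℝ, 0 < C ∧ ∀ (f : ℂ → ℂ) (fb : ℝ → ℂ), MemHp p ω f fb →
      (circInt fun θ => areaOp μ ν f θ ^ q * ENNReal.ofReal (ω θ)) ^ (1 / q) ≤
        ENNReal.ofReal C * wLpNorm p ω fb) :
    ∃ C : ℝ, 0 < C ∧ ∀ b ℓ : ℝ, 0 < ℓ → ℓ ≤ 2 * π →
      ∫⁻ θ in Set.Ioo b (b + ℓ),
          (∫⁻ z in stolz (bpt θ) ∩ lambdaSet b ℓ, (Tmeas ν z)⁻¹ ∂μ) *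
            ENNReal.ofReal (ω θ) ≤
        ENNReal.ofReal C * wInt ω b ℓ ^ (1 + 1 / p - 1 / q) := by
  obtain ⟨C₁, hC₁, hnorm⟩ := hω.exists_lpNormP_arcTestFn_le hp
  obtain ⟨C₂, hC₂, hbdd⟩ := hbdd
  obtain ⟨N, hN⟩ : ∃ N : ℕ, 2 ≤ N * p := ⟨⌈2 / p⌉₊, (div_le_iff₀ hp).mp (Nat.le_ceil _)⟩
  refine ⟨8 ^ N * ((2 * π) ^ (1 / q) * C₂ * C₁ ^ (1 / p)), by positivity,
    fun b ℓ hℓ hℓ2π => ?_⟩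
  rcases eq_or_ne (wInt ω b ℓ) ⊤ with hW | hW
  · have hexp : 0 < 1 + 1 / p - 1 / q := by
      linarith [one_div_pos.mpr hp, div_le_one_of_le₀ hq (zero_le_one.trans hq)]
    rw [hW, ENNReal.top_rpow_of_pos hexp, ENNReal.mul_top (by positivity)]
    exact le_top
  have hfnorm := hnorm N hN b ℓ hℓ hℓ2π
  have hf := arcTestFn_memHp hℓ hℓ2π p ω N
    (hfnorm.trans_lt (ENNReal.mul_lt_top ENNReal.ofReal_lt_top hW.lt_top))
  have hA : Function.Periodic (areaOp μ ν (arcTestFn b ℓ N)) (2 * π) := fun θ => by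
    simp only [areaOp, bpt_periodic θ]
  calc _ ≤ ∫⁻ θ in Ioo b (b + ℓ), ENNReal.ofReal (8 ^ N) *
          (areaOp μ ν (arcTestFn b ℓ N) θ * ENNReal.ofReal (ω θ)) :=
        lintegral_mono fun θ => by
          rw [← mul_assoc]
          gcongr
          exact setLIntegral_inv_Tmeas_le_areaOp μ ν hℓ hℓ2π N θ
    _ ≤ ENNReal.ofReal (8 ^ N) * (ENNReal.ofReal ((2 * π) ^ (1 / q) * C₂ * C₁ ^ (1 / p)) *
          wInt ω b ℓ ^ (1 + 1 / p - 1 / q)) := by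
        rw [lintegral_const_mul' _ _ ENNReal.ofReal_ne_top]
        gcongr
        exact setLIntegral_mul_le_wInt_rpow hA hω.1 hω.2.1 hp hq hℓ2π hC₁.le hC₂.le
          ((hbdd _ _ hf).trans (by gcongr; exact ENNReal.rpow_le_rpow hfnorm (by positivity)))
    _ = _ := by rw [← mul_assoc, ← ENNReal.ofReal_mul (by positivity)]

/-- The necessity estimate in the proof of Theorem 1.4 (case `q ≥ 1`): if
`A_{μ,ν} : H^p(ω) → L^q(ω)` is bounded, then
`∫_I ∫_{Γ(ξ)∩Λ(I)} (1/ν(T(z))) dμ(z) ω(ξ)|dξ| ≤ C·ω(I)^{1+1/p-1/q}` for every arc `I`. -/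
theorem area_operator_necessity_estimate
    (μ ν : Measure ℂ) (ω : ℝ → ℝ) (p q : ℝ)
    (hν0 : μ {z | z ∈ unitDisk ∧ Tmeas ν z = 0} = 0)
    (hω0 : μ {z | z ∈ unitDisk ∧ TmeasW ω z = 0} = 0)
    (hω : IsA1 ω) (hp : 0 < p) (hpq : p ≤ q) (hq : 1 ≤ q)
    (hbdd : ∃ C : ℝ, 0 < C ∧ ∀ (f : ℂ → ℂ) (fb : ℝ → ℂ), MemHp p ω f fb →
      (circInt fun θ => areaOp μ ν f θ ^ q * ENNReal.ofReal (ω θ)) ^ (1 / q) ≤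
        ENNReal.ofReal C * wLpNorm p ω fb) :
    ∃ C : ℝ, 0 < C ∧ ∀ b ℓ : ℝ, 0 < ℓ → ℓ ≤ 2 * π →
      ∫⁻ θ in Set.Ioo b (b + ℓ),
          (∫⁻ z in stolz (bpt θ) ∩ lambdaSet b ℓ, (Tmeas ν z)⁻¹ ∂μ) *
            ENNReal.ofReal (ω θ) ≤
        ENNReal.ofReal C * wInt ω b ℓ ^ (1 + 1 / p - 1 / q) :=
  area_operator_necessity_estimate_general μ ν ω p q hω hp hq hbdd

end
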